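/- Existence of Riemann invariants (Lemma 3.1). There exists a smooth map w = (w₁, w₂) : Ω → ℝ² which is injective on Ω and whose derivative is invertible at every point of Ω (hence w is a diffeomorphism onto its image), such that for all z ∈ Ω: ∇w₁(z) · r₁(z) = 0 and ∇w₂(z) · r₂(z) = 0, and ∂w₁/∂z₁(z) > 0 and ∂w₂/∂z₁(z) < 0. -/

import Mathlib

/-- The half-plane `Ω = {(z₁,z₂) ∈ ℝ² : z₁ > 0}`. -/
def Omega : Set (ℝ × ℝ) := {z : ℝ × ℝ | 0 < z.1}

/-- The eigenvalue `λ₁(z₁,z₂) = (z₂ − √(z₂² + 4z₁))/2` of `[[z₂, z₁],[1,0]]`. -/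
noncomputable def lam1 (z : ℝ × ℝ) : ℝ := (z.2 - Real.sqrt (z.2 ^ 2 + 4 * z.1)) / 2

/-- The eigenvalue `λ₂(z₁,z₂) = (z₂ + √(z₂² + 4z₁))/2` of `[[z₂, z₁],[1,0]]`. -/
noncomputable def lam2 (z : ℝ × ℝ) : ℝ := (z.2 + Real.sqrt (z.2 ^ 2 + 4 * z.1)) / 2

/-!
On `Ω` the eigenvalues satisfy `λ₁ < 0 < λ₂`, `λ₁ λ₂ = -z₁` and `λ₁ + λ₂ = z₂`, so `a = √(-λ₁)` and
`b = √λ₂` are coordinates on `Ω`, with `z = (a²b², b² - a²)`. Integrating the characteristic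
equations in these coordinates gives the invariants `w₂ + i w₁ = (b + i a)³`. Their gradients
`(3/(2a), 3a/2)` and `(-3/(2b), 3b/2)` annihilate `r₁ = (-a², 1)` and `r₂ = (b², 1)` and have
Jacobian `9 (a² + b²) / (4ab) > 0`, and `w` is injective because `ζ ↦ ζ³` is injective on the open
first quadrant.
-/

theorem Complex.eq_of_pow_three_eq {ζ η : ℂ} (hζ : 0 < ζ.re ∧ 0 < ζ.im)
    (hη : 0 < η.re ∧ 0 < η.im) (h : ζ ^ 3 = η ^ 3) : ζ = η := by
  have hfactor : (ζ - η) * (ζ ^ 2 + ζ * η + η ^ 2) = 0 := by linear_combination h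
  -- `ζ²`, `ζη` and `η²` all lie in the open upper half-plane.
  have him : 0 < (ζ ^ 2 + ζ * η + η ^ 2).im := by
    simp only [add_im, mul_im, pow_two]
    nlinarith [mul_pos hζ.1 hζ.2, mul_pos hη.1 hη.2, mul_pos hζ.1 hη.2, mul_pos hη.1 hζ.2]
  exact sub_eq_zero.mp ((mul_eq_zero.mp hfactor).resolve_right fun h0 => by simp [h0] at him)

lemma Complex.mk_pow_three (x y : ℝ) :
    (⟨x, y⟩ : ℂ) ^ 3 = ⟨x ^ 3 - 3 * x * y ^ 2, 3 * x ^ 2 * y - y ^ 3⟩ := by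
  apply Complex.ext <;> simp [pow_succ] <;> ring

namespace RiemannInvariants

noncomputable def linearForm (p q : ℝ) : ℝ × ℝ →L[ℝ] ℝ :=
  p • ContinuousLinearMap.fst ℝ ℝ ℝ + q • ContinuousLinearMap.snd ℝ ℝ ℝ

@[simp] lemma linearForm_apply (p q : ℝ) (v : ℝ × ℝ) :
    linearForm p q v = p * v.1 + q * v.2 := by
  simp [linearForm]

lemma bijective_linearForm_prod {p q r s : ℝ} (h : p * s - q * r ≠ 0) :
    Function.Bijective ((linearForm p q).prod (linearForm r s)) := by
  have hinj : Function.Injective ((linearForm p q).prod (linearForm r s)) := by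
    rw [injective_iff_map_eq_zero]
    rintro v hv
    simp only [ContinuousLinearMap.prod_apply, linearForm_apply, Prod.mk_eq_zero] at hv
    have h1 : v.1 * (p * s - q * r) = 0 := by linear_combination s * hv.1 - q * hv.2
    have h2 : v.2 * (p * s - q * r) = 0 := by linear_combination p * hv.2 - r * hv.1
    exact Prod.ext ((mul_eq_zero.mp h1).resolve_right h) ((mul_eq_zero.mp h2).resolve_right h)
  exact ⟨hinj, (LinearMap.injective_iff_surjective
    (f := ((linearForm p q).prod (linearForm r s) : ℝ × ℝ →ₗ[ℝ] ℝ × ℝ))).mp hinj⟩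

noncomputable def a (z : ℝ × ℝ) : ℝ := √(-lam1 z)

noncomputable def b (z : ℝ × ℝ) : ℝ := √(lam2 z)

noncomputable def w1 (z : ℝ × ℝ) : ℝ := 3 * a z * b z ^ 2 - a z ^ 3

noncomputable def w2 (z : ℝ × ℝ) : ℝ := b z ^ 3 - 3 * a z ^ 2 * b z

lemma mk_b_a_pow_three (z : ℝ × ℝ) : (⟨b z, a z⟩ : ℂ) ^ 3 = ⟨w2 z, w1 z⟩ := by
  rw [Complex.mk_pow_three, w1, w2]
  congr 1 <;> ring

lemma lam1_add_lam2 (z : ℝ × ℝ) : lam1 z + lam2 z = z.2 := by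
  unfold lam1 lam2; ring

lemma lam2_sub_lam1 (z : ℝ × ℝ) : lam2 z - lam1 z = √(z.2 ^ 2 + 4 * z.1) := by
  unfold lam1 lam2; ring

lemma lam1_le_lam2 (z : ℝ × ℝ) : lam1 z ≤ lam2 z := by
  rw [← sub_nonneg, lam2_sub_lam1]; positivity

section Omega

variable {z : ℝ × ℝ} (hz : z ∈ Omega)
include hz

lemma disc_pos : 0 < z.2 ^ 2 + 4 * z.1 := by
  have : 0 < z.1 := hz
  positivity

lemma lam1_mul_lam2 : lam1 z * lam2 z = -z.1 := by
  unfold lam1 lam2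
  linear_combination (-1 / 4 : ℝ) * Real.sq_sqrt (disc_pos hz).le

lemma lam1_neg : lam1 z < 0 := by
  have : 0 < z.1 := hz
  nlinarith [lam1_mul_lam2 hz, lam1_le_lam2 z]

lemma lam2_pos : 0 < lam2 z := by
  have : 0 < z.1 := hz
  nlinarith [lam1_mul_lam2 hz, lam1_le_lam2 z]

lemma a_pos : 0 < a z := Real.sqrt_pos.mpr (neg_pos.mpr (lam1_neg hz))

lemma b_pos : 0 < b z := Real.sqrt_pos.mpr (lam2_pos hz)

lemma lam1_eq : lam1 z = -a z ^ 2 := by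
  rw [a, Real.sq_sqrt (neg_nonneg.mpr (lam1_neg hz).le), neg_neg]

lemma lam2_eq : lam2 z = b z ^ 2 := (Real.sq_sqrt (lam2_pos hz).le).symm

lemma fst_eq : z.1 = a z ^ 2 * b z ^ 2 := by
  rw [← neg_neg z.1, ← lam1_mul_lam2 hz, lam1_eq hz, lam2_eq hz]; ring

lemma sqrt_disc_eq : √(z.2 ^ 2 + 4 * z.1) = a z ^ 2 + b z ^ 2 := by
  rw [← lam2_sub_lam1, lam1_eq hz, lam2_eq hz]; ring

lemma snd_eq : z.2 = b z ^ 2 - a z ^ 2 := by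
  rw [← lam1_add_lam2, lam1_eq hz, lam2_eq hz]; ring

lemma hasFDerivAt_sqrt_disc : HasFDerivAt (fun z : ℝ × ℝ => √(z.2 ^ 2 + 4 * z.1))
    (linearForm (2 / (a z ^ 2 + b z ^ 2)) ((b z ^ 2 - a z ^ 2) / (a z ^ 2 + b z ^ 2))) z := by
  have hdisc : HasFDerivAt (fun z : ℝ × ℝ => z.2 ^ 2 + 4 * z.1) (linearForm 4 (2 * z.2)) z := by
    refine (((hasFDerivAt_snd (𝕜 := ℝ) (p := z)).pow 2).add
      ((hasFDerivAt_fst (𝕜 := ℝ) (p := z)).const_mul (4 : ℝ))).congr_fderiv ?_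
    ext <;> simp [linearForm]
  refine (hdisc.sqrt (disc_pos hz).ne').congr_fderiv ?_
  have := a_pos hz
  rw [sqrt_disc_eq hz]
  ext <;> simp [linearForm, snd_eq hz] <;> field_simp
  norm_num

lemma hasFDerivAt_lam1 : HasFDerivAt lam1
    (linearForm (-1 / (a z ^ 2 + b z ^ 2)) (a z ^ 2 / (a z ^ 2 + b z ^ 2))) z := by
  refine ((hasFDerivAt_snd.sub (hasFDerivAt_sqrt_disc hz)).mul_const 2⁻¹).congr_fderiv ?_
  have := a_pos hz
  ext <;> simp [linearForm] <;> field_simp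
  ring

lemma hasFDerivAt_lam2 : HasFDerivAt lam2
    (linearForm (1 / (a z ^ 2 + b z ^ 2)) (b z ^ 2 / (a z ^ 2 + b z ^ 2))) z := by
  refine ((hasFDerivAt_snd.add (hasFDerivAt_sqrt_disc hz)).mul_const 2⁻¹).congr_fderiv ?_
  have := a_pos hz
  ext <;> simp [linearForm] <;> field_simp
  ring

lemma hasFDerivAt_a : HasFDerivAt a
    (linearForm (1 / (2 * a z * (a z ^ 2 + b z ^ 2))) (-a z / (2 * (a z ^ 2 + b z ^ 2)))) z := by
  refine ((hasFDerivAt_lam1 hz).neg.sqrt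
    (neg_pos.mpr (lam1_neg hz)).ne').congr_fderiv ?_
  have := a_pos hz
  rw [show √((-lam1) z) = a z from rfl]
  ext <;> simp [linearForm] <;> field_simp

lemma hasFDerivAt_b : HasFDerivAt b
    (linearForm (1 / (2 * b z * (a z ^ 2 + b z ^ 2))) (b z / (2 * (a z ^ 2 + b z ^ 2)))) z := by
  refine ((hasFDerivAt_lam2 hz).sqrt (lam2_pos hz).ne').congr_fderiv ?_
  have := a_pos hz
  have := b_pos hz
  rw [show √(lam2 z) = b z from rfl]
  ext <;> simp [linearForm] <;> field_simp

lemma hasFDerivAt_w1 : HasFDerivAt w1 (linearForm (3 / (2 * a z)) (3 * a z / 2)) z := by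
  refine ((((hasFDerivAt_a hz).const_mul 3).mul ((hasFDerivAt_b hz).pow 2)).sub
    ((hasFDerivAt_a hz).pow 3)).congr_fderiv ?_
  have := a_pos hz
  have := b_pos hz
  ext <;> simp [linearForm] <;> field_simp <;> ring

lemma hasFDerivAt_w2 : HasFDerivAt w2 (linearForm (-(3 / (2 * b z))) (3 * b z / 2)) z := by
  refine (((hasFDerivAt_b hz).pow 3).sub
    ((((hasFDerivAt_a hz).pow 2).const_mul 3).mul (hasFDerivAt_b hz))).congr_fderiv ?_
  have := a_pos hz
  have := b_pos hz
  ext <;> simp [linearForm] <;> field_simp <;> ring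

lemma contDiffAt_lam1 {n : WithTop ℕ∞} : ContDiffAt ℝ n lam1 z := by
  have := (disc_pos hz).ne'
  unfold lam1
  fun_prop (disch := assumption)

lemma contDiffAt_lam2 {n : WithTop ℕ∞} : ContDiffAt ℝ n lam2 z := by
  have := (disc_pos hz).ne'
  unfold lam2
  fun_prop (disch := assumption)

lemma contDiffAt_a {n : WithTop ℕ∞} : ContDiffAt ℝ n a z :=
  (contDiffAt_lam1 hz).neg.sqrt (neg_pos.mpr (lam1_neg hz)).ne'

lemma contDiffAt_b {n : WithTop ℕ∞} : ContDiffAt ℝ n b z :=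
  (contDiffAt_lam2 hz).sqrt (lam2_pos hz).ne'

lemma bijective_fderiv_w :
    Function.Bijective (fderiv ℝ (fun y => (w1 y, w2 y)) z) := by
  rw [((hasFDerivAt_w1 hz).prodMk (hasFDerivAt_w2 hz)).fderiv]
  apply bijective_linearForm_prod
  have := a_pos hz
  have := b_pos hz
  field_simp
  ring_nf
  positivity

lemma fderiv_w1_apply_r1 : fderiv ℝ w1 z (lam1 z, 1) = 0 := by
  have := a_pos hz
  rw [(hasFDerivAt_w1 hz).fderiv, linearForm_apply, lam1_eq hz]
  field_simp
  ring

lemma fderiv_w2_apply_r2 : fderiv ℝ w2 z (lam2 z, 1) = 0 := by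
  have := b_pos hz
  rw [(hasFDerivAt_w2 hz).fderiv, linearForm_apply, lam2_eq hz]
  field_simp
  ring

lemma fderiv_w1_apply_fst_pos : 0 < fderiv ℝ w1 z (1, 0) := by
  have := a_pos hz
  rw [(hasFDerivAt_w1 hz).fderiv, linearForm_apply]
  positivity

lemma fderiv_w2_apply_fst_neg : fderiv ℝ w2 z (1, 0) < 0 := by
  have := b_pos hz
  rw [(hasFDerivAt_w2 hz).fderiv, linearForm_apply, mul_one, mul_zero, add_zero]
  exact neg_neg_of_pos (by positivity)

end Omega

lemma contDiffOn_w1 {n : WithTop ℕ∞} : ContDiffOn ℝ n w1 Omega := fun z hz => by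
  have := contDiffAt_a hz (n := n)
  have := contDiffAt_b hz (n := n)
  exact (show ContDiffAt ℝ n w1 z by unfold w1; fun_prop).contDiffWithinAt

lemma contDiffOn_w2 {n : WithTop ℕ∞} : ContDiffOn ℝ n w2 Omega := fun z hz => by
  have := contDiffAt_a hz (n := n)
  have := contDiffAt_b hz (n := n)
  exact (show ContDiffAt ℝ n w2 z by unfold w2; fun_prop).contDiffWithinAt

lemma injOn_w : Set.InjOn (fun z => (w1 z, w2 z)) Omega := by
  intro z hz z' hz' h
  simp only [Prod.mk.injEq] at h
  have hζ : (⟨b z, a z⟩ : ℂ) = ⟨b z', a z'⟩ :=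
    Complex.eq_of_pow_three_eq ⟨b_pos hz, a_pos hz⟩ ⟨b_pos hz', a_pos hz'⟩
      (by rw [mk_b_a_pow_three, mk_b_a_pow_three, h.1, h.2])
  have ha : a z = a z' := congrArg Complex.im hζ
  have hb : b z = b z' := congrArg Complex.re hζ
  exact Prod.ext (by rw [fst_eq hz, fst_eq hz', ha, hb]) (by rw [snd_eq hz, snd_eq hz', ha, hb])

end RiemannInvariants

open RiemannInvariants

theorem riemann_invariants_exist :
    ∃ w₁ w₂ : ℝ × ℝ → ℝ,
      ContDiffOn ℝ (⊤ : ℕ∞) w₁ Omega ∧ ContDiffOn ℝ (⊤ : ℕ∞) w₂ Omega ∧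
      Set.InjOn (fun z => (w₁ z, w₂ z)) Omega ∧
      (∀ z ∈ Omega, Function.Bijective (fderiv ℝ (fun y => (w₁ y, w₂ y)) z)) ∧
      (∀ z ∈ Omega,
        fderiv ℝ w₁ z (lam1 z, 1) = 0 ∧
        fderiv ℝ w₂ z (lam2 z, 1) = 0 ∧
        0 < fderiv ℝ w₁ z ((1 : ℝ), (0 : ℝ)) ∧
        fderiv ℝ w₂ z ((1 : ℝ), (0 : ℝ)) < 0) :=
  ⟨w1, w2, contDiffOn_w1, contDiffOn_w2, injOn_w, fun _ hz => bijective_fderiv_w hz,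
    fun _ hz => ⟨fderiv_w1_apply_r1 hz, fderiv_w2_apply_r2 hz, fderiv_w1_apply_fst_pos hz,
      fderiv_w2_apply_fst_neg hz⟩⟩
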